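/- Let p > 3 be a prime and let t, z be p-adic integers. Then Σ_{k=0}^{p−1} ((1+pt)/2)_k (1 − pt/2)_k / (k!)² · z^k ≡ Σ_{k=0}^{p−1} C(2k,k) (1 + pt·H_{2k} − pt·H_k) (z/4)^k (mod p²), a congruence in ℤ_p (each summand on both sides is a p-adic integer; in particular p·C(2k,k)·H_{2k} ∈ ℤ_p for all 0 ≤ k ≤ p−1). -/

import Mathlib

/-!
With `a = pt` the factors of the two Pochhammer symbols pair up as
`((1 + a)/2 + i)(1 - a/2 + i) = c_i + u`, where `c_i = (i + 1/2)(i + 1)` and `u = (a - a²)/4`.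
Since `∏_{i<k} c_i = C(2k,k) k!² / 4^k` and `∑_{i<k} c_i⁻¹ = 4 (H_{2k} - H_k)`, expanding
`∏ (c_i + u)` to first order in `u` produces the right-hand summand, up to a remainder of size
`‖u‖²` and the term `C(2k,k)(H_{2k} - H_k) a²`. Both are `O(p²)`: `a` and `u` lie in `pℤ_p`,
the `c_i` are `p`-integral for odd `p`, `k!` is a unit for `k < p`, and `C(2k,k)(H_{2k} - H_k)`
is `p`-integral.
-/

open Finset Nat

section Identities

lemma ascPochhammer_eval_eq_prod_range {R : Type*} [CommSemiring R] (x : R) (k : ℕ) :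
    (ascPochhammer R k).eval x = ∏ j ∈ range k, (x + j) := by
  induction k with
  | zero => simp
  | succ n ih => rw [ascPochhammer_succ_eval, prod_range_succ, ih]

variable {K : Type*} [Field K] [CharZero K]

variable (K) in
/-- The `i`-th factor of `(1/2)_k (1)_k`. -/
def halfOneFactor (i : ℕ) : K := ((i : K) + 1 / 2) * (i + 1)

lemma halfOneFactor_eq_natCast_div (i : ℕ) :
    halfOneFactor K i = ((2 * i + 1 : ℕ) : K) * (i + 1 : ℕ) / 2 := by
  unfold halfOneFactor; push_cast; ring

lemma halfOneFactor_ne_zero (i : ℕ) : halfOneFactor K i ≠ 0 := by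
  rw [halfOneFactor_eq_natCast_div]
  exact div_ne_zero (mul_ne_zero (Nat.cast_ne_zero.2 (2 * i).succ_ne_zero)
    (Nat.cast_ne_zero.2 i.succ_ne_zero)) two_ne_zero

lemma ascPochhammer_eval_mul_eval_eq_prod (a : K) (k : ℕ) :
    (ascPochhammer K k).eval ((1 + a) / 2) * (ascPochhammer K k).eval (1 - a / 2) =
      ∏ i ∈ range k, (halfOneFactor K i + (a - a ^ 2) / 4) := by
  rw [ascPochhammer_eval_eq_prod_range, ascPochhammer_eval_eq_prod_range, ← prod_mul_distrib]
  exact prod_congr rfl fun i _ => by unfold halfOneFactor; ring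

lemma factorial_two_mul_eq_prod_halfOneFactor (k : ℕ) :
    ((2 * k)! : K) = 4 ^ k * ∏ i ∈ range k, halfOneFactor K i := by
  induction k with
  | zero => simp
  | succ n ih =>
    rw [show 2 * (n + 1) = 2 * n + 1 + 1 by ring, factorial_succ, factorial_succ,
      prod_range_succ, pow_succ]
    push_cast
    rw [ih, halfOneFactor]
    ring

lemma choose_mul_factorial_sq_eq_prod_halfOneFactor (k : ℕ) :
    ((2 * k).choose k : K) * (k ! : K) ^ 2 = 4 ^ k * ∏ i ∈ range k, halfOneFactor K i := by
  rw [← factorial_two_mul_eq_prod_halfOneFactor, two_mul,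
    ← add_choose_mul_factorial_mul_factorial]
  push_cast
  ring

lemma sum_inv_halfOneFactor (k : ℕ) :
    ∑ i ∈ range k, (halfOneFactor K i)⁻¹ = 4 * ((harmonic (2 * k) : K) - harmonic k) := by
  induction k with
  | zero => simp
  | succ n ih =>
    rw [sum_range_succ, ih, show 2 * (n + 1) = 2 * n + 1 + 1 by ring, harmonic_succ,
      harmonic_succ, harmonic_succ, halfOneFactor_eq_natCast_div]
    have h₁ : (2 * n + 1 : K) ≠ 0 := by exact_mod_cast (2 * n).succ_ne_zero
    have h₂ : (n + 1 : K) ≠ 0 := by exact_mod_cast n.succ_ne_zero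
    have h₃ : (2 * n + 1 + 1 : K) ≠ 0 := by exact_mod_cast (2 * n + 1).succ_ne_zero
    push_cast
    field_simp
    ring

lemma summand_sub_summand_eq (a z : K) (k : ℕ) :
    (ascPochhammer K k).eval ((1 + a) / 2) * (ascPochhammer K k).eval (1 - a / 2) /
          (k ! : K) ^ 2 * z ^ k -
        ((2 * k).choose k : K) * (1 + a * (harmonic (2 * k) : K) - a * (harmonic k : K)) *
          (z / 4) ^ k =
      (∏ i ∈ range k, (halfOneFactor K i + (a - a ^ 2) / 4) -
          (∏ i ∈ range k, halfOneFactor K i) *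
            (1 + (a - a ^ 2) / 4 * ∑ i ∈ range k, (halfOneFactor K i)⁻¹)) *
          z ^ k / (k ! : K) ^ 2 -
        ((2 * k).choose k : K) * ((harmonic (2 * k) : K) - harmonic k) * (z / 4) ^ k * a ^ 2 := by
  have hprod : ∏ i ∈ range k, halfOneFactor K i = (2 * k).choose k * (k ! : K) ^ 2 / 4 ^ k := by
    rw [choose_mul_factorial_sq_eq_prod_halfOneFactor]; field_simp
  have : (k ! : K) ≠ 0 := by exact_mod_cast k.factorial_ne_zero
  rw [ascPochhammer_eval_mul_eval_eq_prod, hprod, sum_inv_halfOneFactor, div_pow]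
  generalize ∏ i ∈ range k, (halfOneFactor K i + (a - a ^ 2) / 4) = P
  field_simp
  ring

end Identities

section Ultrametric

variable {K : Type*} [NormedField K] [IsUltrametricDist K] {c : ℕ → K}

lemma norm_prod_mul_sum_inv_le_one (hc : ∀ i, ‖c i‖ ≤ 1) (hc₀ : ∀ i, c i ≠ 0) (k : ℕ) :
    ‖(∏ i ∈ range k, c i) * ∑ i ∈ range k, (c i)⁻¹‖ ≤ 1 := by
  rw [mul_sum]
  refine IsUltrametricDist.norm_sum_le_of_forall_le_of_nonneg zero_le_one fun i hi => ?_
  rw [← prod_erase_mul _ _ hi, mul_inv_cancel_right₀ (hc₀ i), norm_prod]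
  exact prod_le_one (fun _ _ => norm_nonneg _) fun j _ => hc j

lemma norm_prod_add_sub_le_sq {u : K} (hc : ∀ i, ‖c i‖ ≤ 1) (hc₀ : ∀ i, c i ≠ 0)
    (hu : ‖u‖ ≤ 1) (k : ℕ) :
    ‖∏ i ∈ range k, (c i + u) - (∏ i ∈ range k, c i) * (1 + u * ∑ i ∈ range k, (c i)⁻¹)‖ ≤
      ‖u‖ ^ 2 := by
  induction k with
  | zero => simp
  | succ n ih =>
    have hcu : ‖c n + u‖ ≤ 1 :=
      (IsUltrametricDist.norm_add_le_max _ _).trans (max_le (hc n) hu)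
    have hrec : ∏ i ∈ range (n + 1), (c i + u) -
          (∏ i ∈ range (n + 1), c i) * (1 + u * ∑ i ∈ range (n + 1), (c i)⁻¹) =
        (∏ i ∈ range n, (c i + u) -
            (∏ i ∈ range n, c i) * (1 + u * ∑ i ∈ range n, (c i)⁻¹)) * (c n + u) +
          u ^ 2 * ((∏ i ∈ range n, c i) * ∑ i ∈ range n, (c i)⁻¹) := by
      rw [prod_range_succ, prod_range_succ, sum_range_succ]
      linear_combination (-(u * ∏ i ∈ range n, c i)) * mul_inv_cancel₀ (hc₀ n)
    rw [hrec]
    refine (IsUltrametricDist.norm_add_le_max _ _).trans (max_le ?_ ?_)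
    · rw [norm_mul]
      exact (mul_le_of_le_one_right (norm_nonneg _) hcu).trans ih
    · rw [norm_mul, norm_pow]
      exact mul_le_of_le_one_right (by positivity) (norm_prod_mul_sum_inv_le_one hc hc₀ n)

end Ultrametric

section Padic

variable {p : ℕ} [hp : Fact p.Prime]

lemma Padic.norm_two_eq_one (hp₂ : p ≠ 2) : ‖(2 : ℚ_[p])‖ = 1 := by
  exact_mod_cast Padic.norm_natCast_eq_one_iff.2 ((Nat.coprime_primes hp.out prime_two).2 hp₂)

lemma Padic.norm_halfOneFactor_le_one (hp₂ : p ≠ 2) (i : ℕ) :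
    ‖halfOneFactor ℚ_[p] i‖ ≤ 1 := by
  rw [halfOneFactor_eq_natCast_div, norm_div, Padic.norm_two_eq_one hp₂, div_one, norm_mul]
  exact mul_le_one₀ (IsUltrametricDist.norm_natCast_le_one ℚ_[p] _) (norm_nonneg _)
    (IsUltrametricDist.norm_natCast_le_one ℚ_[p] _)

/-- The only denominator of `H_{2k} - H_k` divisible by `p` is `p` itself, and then `p ≤ 2k`
forces `p ∣ C(2k, k)`. -/
lemma Padic.norm_choose_mul_harmonic_sub_le_one {k : ℕ} (hk : k < p) :
    ‖((2 * k).choose k : ℚ_[p]) * ((harmonic (2 * k) : ℚ_[p]) - harmonic k)‖ ≤ 1 := by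
  have hH : (harmonic (2 * k) : ℚ_[p]) - harmonic k =
      ∑ i ∈ Ico k (2 * k), ((i + 1 : ℕ) : ℚ_[p])⁻¹ := by
    rw [sum_Ico_eq_sub _ (by omega : k ≤ 2 * k), harmonic, harmonic]
    push_cast
    rfl
  rw [hH, mul_sum]
  refine IsUltrametricDist.norm_sum_le_of_forall_le_of_nonneg zero_le_one fun i hi => ?_
  rw [mem_Ico] at hi
  by_cases hdvd : p ∣ i + 1
  · obtain ⟨m, hm⟩ : p ∣ (2 * k).choose k :=
      two_mul k ▸ hp.out.dvd_choose_add hk hk (by have := le_of_dvd i.succ_pos hdvd; omega)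
    have hip : i + 1 = p := by
      obtain ⟨j, hj⟩ := hdvd
      rcases j with _ | _ | j <;> [omega; omega; nlinarith]
    rw [hm, hip]
    push_cast
    rw [mul_comm (p : ℚ_[p]), mul_assoc, mul_inv_cancel₀ (by exact_mod_cast hp.out.ne_zero),
      mul_one]
    exact IsUltrametricDist.norm_natCast_le_one ℚ_[p] m
  · rw [norm_mul, norm_inv,
      Padic.norm_natCast_eq_one_iff.2 ((hp.out.coprime_iff_not_dvd).2 hdvd), inv_one, mul_one]
    exact IsUltrametricDist.norm_natCast_le_one ℚ_[p] _

lemma Padic.norm_summand_sub_summand_le (hp₂ : p ≠ 2) (t z : ℤ_[p]) {k : ℕ} (hk : k < p) :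
    ‖(ascPochhammer ℚ_[p] k).eval ((1 + (p : ℚ_[p]) * (t : ℚ_[p])) / 2) *
          (ascPochhammer ℚ_[p] k).eval (1 - (p : ℚ_[p]) * (t : ℚ_[p]) / 2) /
            ((k.factorial : ℚ_[p])) ^ 2 * (z : ℚ_[p]) ^ k -
        (Nat.choose (2 * k) k : ℚ_[p]) *
          (1 + (p : ℚ_[p]) * (t : ℚ_[p]) * ((harmonic (2 * k) : ℚ) : ℚ_[p])
             - (p : ℚ_[p]) * (t : ℚ_[p]) * ((harmonic k : ℚ) : ℚ_[p])) *
            ((z : ℚ_[p]) / 4) ^ k‖ ≤ (p : ℝ) ^ (-2 : ℤ) := by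
  set a : ℚ_[p] := (p : ℚ_[p]) * t
  have hp₁ : ‖(p : ℚ_[p])‖ ≤ 1 := IsUltrametricDist.norm_natCast_le_one ℚ_[p] p
  have ha : ‖a‖ ≤ ‖(p : ℚ_[p])‖ := by
    rw [norm_mul, PadicInt.padic_norm_e_of_padicInt]
    exact mul_le_of_le_one_right (norm_nonneg _) t.norm_le_one
  have h₄ : ‖(4 : ℚ_[p])‖ = 1 := by
    rw [show (4 : ℚ_[p]) = 2 ^ 2 by norm_num, norm_pow, Padic.norm_two_eq_one hp₂, one_pow]
  have hu : ‖(a - a ^ 2) / 4‖ ≤ ‖(p : ℚ_[p])‖ := by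
    rw [norm_div, h₄, div_one, sub_eq_add_neg]
    refine (IsUltrametricDist.norm_add_le_max _ _).trans (max_le ha ?_)
    rw [norm_neg, norm_pow, sq]
    exact (mul_le_of_le_one_right (norm_nonneg _) (ha.trans hp₁)).trans ha
  have hz : ‖(z : ℚ_[p])‖ ^ k ≤ 1 := by
    rw [PadicInt.padic_norm_e_of_padicInt]
    exact pow_le_one₀ (norm_nonneg _) z.norm_le_one
  have hfac : ‖(k ! : ℚ_[p])‖ = 1 :=
    Padic.norm_natCast_eq_one_iff.2 ((hp.out.coprime_iff_not_dvd).2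
      fun h => hk.not_ge (hp.out.dvd_factorial.1 h))
  have hsq : ‖(p : ℚ_[p])‖ ^ 2 = (p : ℝ) ^ (-2 : ℤ) := by
    rw [Padic.norm_p, inv_pow, zpow_neg, zpow_ofNat]
  rw [summand_sub_summand_eq, ← hsq, sub_eq_add_neg]
  refine (IsUltrametricDist.norm_add_le_max _ _).trans (max_le ?_ ?_)
  · rw [norm_div, norm_mul, norm_pow, norm_pow, hfac, one_pow, div_one]
    refine (mul_le_of_le_one_right (norm_nonneg _) hz).trans ?_
    refine (norm_prod_add_sub_le_sq (Padic.norm_halfOneFactor_le_one hp₂) halfOneFactor_ne_zero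
      (hu.trans hp₁) k).trans ?_
    exact pow_le_pow_left₀ (norm_nonneg _) hu 2
  · rw [norm_neg, norm_mul, norm_mul, norm_pow, norm_pow, norm_div, h₄, div_one]
    exact (mul_le_of_le_one_left (by positivity) (mul_le_one₀
      (Padic.norm_choose_mul_harmonic_sub_le_one hk) (by positivity) hz)).trans
      (pow_le_pow_left₀ (norm_nonneg _) ha 2)

end Padic

/-- **Congruence (2.2).** For a prime `p > 3` and `t, z ∈ ℤ_p`,
`Σ_{k=0}^{p-1} ((1+pt)/2)_k (1 - pt/2)_k / k!² · z^k
  ≡ Σ_{k=0}^{p-1} C(2k,k)(1 + pt H_{2k} - pt H_k)(z/4)^k (mod p²)` in `ℤ_p`. -/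
theorem congr_2F1_three_halves (p : ℕ) [Fact p.Prime] (hp : 3 < p) (t z : ℤ_[p]) :
    ‖(∑ k ∈ Finset.range p,
          (ascPochhammer ℚ_[p] k).eval ((1 + (p : ℚ_[p]) * (t : ℚ_[p])) / 2) *
            (ascPochhammer ℚ_[p] k).eval (1 - (p : ℚ_[p]) * (t : ℚ_[p]) / 2) /
              ((k.factorial : ℚ_[p]))^2 * (z : ℚ_[p])^k) -
      ∑ k ∈ Finset.range p,
          (Nat.choose (2 * k) k : ℚ_[p]) *
            (1 + (p : ℚ_[p]) * (t : ℚ_[p]) * ((harmonic (2 * k) : ℚ) : ℚ_[p])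
               - (p : ℚ_[p]) * (t : ℚ_[p]) * ((harmonic k : ℚ) : ℚ_[p])) *
              ((z : ℚ_[p]) / 4)^k‖
      ≤ (p : ℝ) ^ (-2 : ℤ) := by
  rw [← sum_sub_distrib]
  exact IsUltrametricDist.norm_sum_le_of_forall_le_of_nonneg (by positivity) fun k hk =>
    Padic.norm_summand_sub_summand_le (by omega) t z (mem_range.1 hk)
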